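/- arXiv:2303.09265 — 2 statements merged into one kernel-verified Lean document; each statement's English description precedes it below -/
import Mathlib

section
/- Let p be an odd prime, q = p^m, and let b, c ∈ F_{q²}* with N(b) = N(c). Let c₀ ∈ F_{q²}, let k be an integer with 0 < k < m, and set ℓ(x) = (b·x^q + c·x)^{p^k} − c₀·(b·x^q + c·x) and f(x) = x^{q+1} + ℓ(x²). Then f is a planar function on F_{q²} if and only if all three of the following hold: (i) (b^{−1}·c)^{(q+1)/2} = −1; (ii) for every ω ∈ F_{q²}* with ω^{p^k−1} = c₀ one has ω^{q−1} ≠ b^q·c^{−1}; (iii) for every ω ∈ F_{q²}* with ((b^{−1}·c^q)^{p^k} − 1)·ω^{p^k−1} = b^{−1}·c^q·c₀^q − c₀ one has ω^{q−1} ≠ b^q·c^{−1}. -/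
/-!
For additive `ℓ`, `x ↦ f (x + e) - f x` is affine; substituting `u = e x` and scaling by
`μ = e ^ (q - 1)` turns its linear part into `u ↦ u ^ q + μ ^ 2 u + 2 μ ℓ(u)`, and by Hilbert 90 the
`μ` that occur are exactly the elements of norm one. Raising `u ^ q + μ ^ 2 u + 2 μ ℓ(u) = 0` to the
`q`-th power shows `ℓ(u) ∈ 𝔽_q`. Put `ω = b u ^ q + c u`: as `N(b) = N(c)`, `ω ^ q = (b ^ q / c) ω`,
so `ℓ(u) = ω ^ (p ^ k) - c₀ ω` lies in `𝔽_q` exactly when `ω` solves the equation of (iii). A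
nonzero kernel element thus gives either `ω = 0`, forcing `b⁻¹ c = μ ^ 2` and hence
`(b⁻¹ c) ^ ((q + 1) / 2) = N(μ) = 1` against (i), or a root `ω` excluded by (iii). Conversely, if
(i) fails then `b⁻¹ c = μ ^ 2` for some `μ` of norm one, and if (iii) fails at `ω` one solves
`b u ^ q + c u = ω`, `u ^ q + u = -2 (ω ^ (p ^ k) - c₀ ω)`; either way a kernel element appears.
Condition (ii) is the special case `ω ^ (p ^ k - 1) = c₀` of (iii).
-/

open Function

theorem IsCyclic.exists_pow_eq_of_pow_eq_one {G : Type*} [Group G] [IsCyclic G] [Finite G]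
    {a b : ℕ} (hcard : Nat.card G = a * b) {x : G} (hx : x ^ b = 1) : ∃ y : G, y ^ a = x := by
  obtain ⟨g, hg⟩ := IsCyclic.exists_generator (α := G)
  obtain ⟨t, rfl⟩ := Subgroup.mem_zpowers_iff.mp (hg x)
  have hb : (b : ℤ) ≠ 0 := by
    have := hcard ▸ Nat.card_pos (α := G)
    exact_mod_cast (Nat.pos_of_mul_pos_left this).ne'
  have hdvd : (a : ℤ) * b ∣ t * b := by
    rw [← Nat.cast_mul, ← hcard, ← orderOf_eq_card_of_forall_mem_zpowers hg,
      orderOf_dvd_iff_zpow_eq_one, zpow_mul, zpow_natCast, hx]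
  obtain ⟨s, rfl⟩ := (mul_dvd_mul_iff_right hb).mp hdvd
  exact ⟨g ^ s, by rw [← zpow_natCast, ← zpow_mul, mul_comm]⟩

theorem FiniteField.exists_pow_eq_of_pow_eq_one {F : Type*} [Field F] [Fintype F] {a b : ℕ}
    (hcard : Fintype.card F = a * b + 1) {δ : F} (hδ : δ ^ b = 1) :
    ∃ y : F, y ≠ 0 ∧ y ^ a = δ := by
  classical
  have hb : b ≠ 0 := by
    rintro rfl
    exact (Fintype.one_lt_card (α := F)).ne' (by simpa using hcard)
  have hδ0 : δ ≠ 0 := by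
    rintro rfl
    simp [zero_pow hb] at hδ
  obtain ⟨y, hy⟩ := IsCyclic.exists_pow_eq_of_pow_eq_one (G := Fˣ) (x := Units.mk0 δ hδ0)
    (by rw [Nat.card_eq_fintype_card, Fintype.card_units, hcard, Nat.add_sub_cancel])
    (Units.ext (by simp [hδ]))
  exact ⟨y, y.ne_zero, by simpa using congrArg Units.val hy⟩

theorem inv_mul_pow_eq_pow_mul_inv {K : Type*} [Field K] {b c : K} {n : ℕ} (hb : b ≠ 0)
    (hc : c ≠ 0) (h : b ^ (n + 1) = c ^ (n + 1)) : b⁻¹ * c ^ n = b ^ n * c⁻¹ := by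
  field_simp
  rw [pow_succ, pow_succ] at h
  linear_combination -h

theorem cond_ii_of_cond_iii {R : Type*} [CommRing R] {q n : ℕ} (hq : q ≠ 0) (hn : n ≠ 0)
    {d c₀ : R}
    (h : ∀ ω : R, ω ≠ 0 → (d ^ n - 1) * ω ^ (n - 1) = d * c₀ ^ q - c₀ → ω ^ (q - 1) ≠ d) :
    ∀ ω : R, ω ≠ 0 → ω ^ (n - 1) = c₀ → ω ^ (q - 1) ≠ d := by
  rintro ω hω0 rfl hωd
  refine h ω hω0 ?_ hωd
  have hω : ω ^ q = d * ω := by rw [← pow_sub_one_mul hq, hωd]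
  rw [← pow_mul, mul_comm (n - 1) q, pow_mul, hω, mul_pow, ← mul_assoc, ← pow_succ',
    Nat.sub_add_cancel (Nat.one_le_iff_ne_zero.mpr hn)]
  ring

section CardSq

variable {F : Type*} [Field F] [Fintype F] {q : ℕ}

theorem pow_pow_eq_self_of_card_eq_sq (hF : Fintype.card F = q ^ 2) (x : F) :
    (x ^ q) ^ q = x := by
  rw [← pow_mul, ← sq, ← hF, FiniteField.pow_card]

theorem pow_sub_one_pow_add_one_eq_one (hF : Fintype.card F = q ^ 2) {e : F} (he : e ≠ 0) :
    (e ^ (q - 1)) ^ (q + 1) = 1 := by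
  rw [← pow_mul, mul_comm, ← Nat.sq_sub_sq, one_pow, ← hF,
    FiniteField.pow_card_sub_one_eq_one e he]

/-- Hilbert 90 for `𝔽_{q²} / 𝔽_q`. -/
theorem exists_pow_sub_one_eq_of_pow_add_one_eq_one (hF : Fintype.card F = q ^ 2) {δ : F}
    (hδ : δ ^ (q + 1) = 1) : ∃ y : F, y ≠ 0 ∧ y ^ (q - 1) = δ := by
  refine FiniteField.exists_pow_eq_of_pow_eq_one (hF.trans ?_) hδ
  obtain ⟨r, rfl⟩ : ∃ r, q = r + 1 := Nat.exists_eq_add_one.mpr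
    (Nat.pos_of_ne_zero (by rintro rfl; simp at hF))
  rw [Nat.add_sub_cancel]
  ring

theorem exists_sq_pow_sub_one_eq_of_pow_half_eq_one (hF : Fintype.card F = q ^ 2) (hq : Odd q)
    {δ : F} (hδ : δ ^ ((q + 1) / 2) = 1) : ∃ e : F, e ≠ 0 ∧ (e ^ (q - 1)) ^ 2 = δ := by
  have hcard : Fintype.card F = (q - 1) * 2 * ((q + 1) / 2) + 1 := by
    obtain ⟨j, rfl⟩ := hq
    rw [hF, show (2 * j + 1 + 1) / 2 = j + 1 by omega, Nat.add_sub_cancel]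
    ring
  obtain ⟨e, he, hδe⟩ := FiniteField.exists_pow_eq_of_pow_eq_one hcard hδ
  exact ⟨e, he, by rw [← pow_mul, hδe]⟩

end CardSq

def IsPlanar {F : Type*} [AddGroup F] (f : F → F) : Prop :=
  ∀ e : F, e ≠ 0 → Bijective fun x => f (x + e) - f x

theorem AddMonoidHom.bijective_add_const_iff {G : Type*} [AddGroup G] [Finite G] (g : G →+ G)
    (a : G) :
    Bijective (fun x => g x + a) ↔ ∀ x, g x = 0 → x = 0 := by
  rw [← Finite.injective_iff_bijective, ← injective_iff_map_eq_zero]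
  exact (add_left_injective a).of_comp_iff g

section Frobenius

variable {F : Type*} [Field F] {p m : ℕ} [ExpChar F p]

local notation "q" => p ^ m

theorem isPlanar_pow_succ_add_comp_sq_iff [Fintype F] (ℓ : F →+ F) {f : F → F}
    (hf : ∀ x, f x = x ^ (q + 1) + ℓ (x ^ 2)) :
    IsPlanar f ↔ ∀ e : F, e ≠ 0 → ∀ u : F, u ≠ 0 →
      u ^ q + (e ^ (q - 1)) ^ 2 * u + 2 * e ^ (q - 1) * ℓ u ≠ 0 := by
  refine forall₂_congr fun e he => ?_
  let L : F →+ F := .mk' (fun x => e * x ^ q + e ^ q * x + ℓ (2 * e * x)) fun x y => by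
    simp only [add_pow_expChar_pow, mul_add, map_add]
    ring
  have hΔ : (fun x => f (x + e) - f x) = fun x => L x + f e := by
    funext x
    simp only [L, AddMonoidHom.mk'_apply, hf, pow_succ, add_pow_expChar_pow,
      show (x + e) ^ 2 = x ^ 2 + 2 * e * x + e ^ 2 by ring, map_add]
    ring
  have hscale : ∀ x, e ^ (q - 1) * L x =
      (e * x) ^ q + (e ^ (q - 1)) ^ 2 * (e * x) + 2 * e ^ (q - 1) * ℓ (e * x) := by
    intro x
    have he1 : e ^ (q - 1) * e = e ^ q := pow_sub_one_mul (expChar_pow_pos F p m).ne' e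
    have h2ℓ : ℓ (2 * e * x) = 2 * ℓ (e * x) := by rw [mul_assoc, two_mul, map_add, two_mul]
    simp only [L, AddMonoidHom.mk'_apply, h2ℓ, mul_pow]
    linear_combination (x ^ q - e ^ (q - 1) * x) * he1
  rw [hΔ, L.bijective_add_const_iff]
  constructor
  · intro h u hu hM
    obtain ⟨x, rfl⟩ : ∃ x, u = e * x := ⟨u / e, (mul_div_cancel₀ u he).symm⟩
    rw [← hscale, mul_eq_zero, or_iff_right (pow_ne_zero _ he)] at hM
    exact hu (by rw [h x hM, mul_zero])
  · intro h x hx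
    by_contra hx0
    exact h (e * x) (mul_ne_zero he hx0) (by rw [← hscale, hx, mul_zero])

theorem map_add_of_eq_pow_sub_mul {ℓ : F → F} {b c c₀ : F} {k : ℕ}
    (hℓ : ∀ x, ℓ x = (b * x ^ q + c * x) ^ p ^ k - c₀ * (b * x ^ q + c * x)) (u v : F) :
    ℓ (u + v) = ℓ u + ℓ v := by
  have hT : b * (u + v) ^ q + c * (u + v) = (b * u ^ q + c * u) + (b * v ^ q + c * v) := by
    rw [add_pow_expChar_pow]
    ring
  rw [hℓ, hℓ, hℓ, hT, add_pow_expChar_pow]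
  ring

theorem two_pow_expChar_pow : (2 : F) ^ q = 2 := map_ofNat (iterateFrobenius F p m) 2

theorem pow_eq_self_of_add_mul_eq_zero [Fintype F] (hF : Fintype.card F = q ^ 2) {μ u r : F}
    (hμ : μ ^ (q + 1) = 1) (h : u ^ q + μ ^ 2 * u + μ * r = 0) : r ^ q = r := by
  have hσ := congrArg (· ^ q) h
  simp only [add_pow_expChar_pow, mul_pow, pow_pow_eq_self_of_card_eq_sq hF,
    zero_pow (expChar_pow_pos F p m).ne'] at hσ
  rw [pow_succ] at hμ
  linear_combination μ * hσ - μ ^ q * h - (μ ^ q * u ^ q + r ^ q - r - μ * u) * hμ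

theorem mul_pow_add_mul_pow_eq_of_pow_succ_eq [Fintype F] (hF : Fintype.card F = q ^ 2) {b c : F}
    (hc : c ≠ 0) (hbc : b ^ (q + 1) = c ^ (q + 1)) (u : F) :
    (b * u ^ q + c * u) ^ q = b ^ q * c⁻¹ * (b * u ^ q + c * u) := by
  rw [add_pow_expChar_pow, mul_pow, mul_pow, pow_pow_eq_self_of_card_eq_sq hF]
  field_simp
  rw [pow_succ, pow_succ] at hbc
  linear_combination -u ^ q * hbc

theorem pow_sub_mul_pow_eq_self_iff {d c₀ ω : F} (k : ℕ) (hω0 : ω ≠ 0) (hω : ω ^ q = d * ω) :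
    (ω ^ p ^ k - c₀ * ω) ^ q = ω ^ p ^ k - c₀ * ω ↔
      (d ^ p ^ k - 1) * ω ^ (p ^ k - 1) = d * c₀ ^ q - c₀ := by
  have hpk : ω ^ (p ^ k - 1) * ω = ω ^ p ^ k := pow_sub_one_mul (expChar_pow_pos F p k).ne' ω
  rw [sub_pow_expChar_pow, mul_pow, pow_right_comm, hω, mul_pow, ← hpk]
  refine ⟨fun h => mul_right_cancel₀ hω0 ?_, fun h => ?_⟩
  · linear_combination h
  · linear_combination ω * h

theorem exists_mul_pow_add_mul_eq_and_pow_add_eq {b c ω r : F} (hc : c ≠ 0) (hbc_ne : b ≠ c)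
    (hbc : b ^ (q + 1) = c ^ (q + 1)) (hω : ω ^ q = b ^ q * c⁻¹ * ω) (hr : r ^ q = r) :
    ∃ u : F, b * u ^ q + c * u = ω ∧ u ^ q + u = r := by
  have hcb : c - b ≠ 0 := sub_ne_zero.mpr hbc_ne.symm
  have hcbq : c ^ q - b ^ q ≠ 0 := by
    rw [← sub_pow_expChar_pow]
    exact pow_ne_zero _ hcb
  have hu : ((ω - b * r) / (c - b)) ^ q = (c * r - ω) / (c - b) := by
    rw [div_pow, sub_pow_expChar_pow, sub_pow_expChar_pow, mul_pow, hω, hr,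
      div_eq_div_iff hcbq hcb]
    field_simp
    rw [pow_succ, pow_succ] at hbc
    linear_combination (c * r - ω) * hbc
  refine ⟨(ω - b * r) / (c - b), ?_, ?_⟩ <;> rw [hu] <;> field_simp <;> ring

theorem ne_zero_of_cond_i_of_cond_iii [Fintype F] (hF : Fintype.card F = q ^ 2) (hq : Odd q)
    (h2 : (2 : F) ≠ 0) {b c c₀ : F} (hb : b ≠ 0) (hc : c ≠ 0) (hbc : b ^ (q + 1) = c ^ (q + 1))
    {k : ℕ} (hi : (b⁻¹ * c) ^ ((q + 1) / 2) = -1)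
    (hiii : ∀ ω : F, ω ≠ 0 →
      ((b ^ q * c⁻¹) ^ p ^ k - 1) * ω ^ (p ^ k - 1) = b ^ q * c⁻¹ * c₀ ^ q - c₀ →
      ω ^ (q - 1) ≠ b ^ q * c⁻¹)
    {μ u : F} (hμ : μ ^ (q + 1) = 1) (hu : u ≠ 0) :
    u ^ q + μ ^ 2 * u + 2 * μ * ((b * u ^ q + c * u) ^ p ^ k - c₀ * (b * u ^ q + c * u)) ≠ 0 := by
  intro hE
  have hωq := mul_pow_add_mul_pow_eq_of_pow_succ_eq hF hc hbc u
  generalize hω : b * u ^ q + c * u = ω at hE hωq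
  by_cases hω0 : ω = 0
  · subst hω0
    rw [zero_pow (expChar_pow_pos F p k).ne', mul_zero, sub_zero, mul_zero, add_zero] at hE
    have hsq : b⁻¹ * c = μ ^ 2 := by
      have h' : (c - b * μ ^ 2) * u = 0 := by linear_combination hω - b * hE
      rw [sub_eq_zero.mp ((mul_eq_zero.mp h').resolve_right hu), inv_mul_cancel_left₀ hb]
    rw [hsq, ← pow_mul, Nat.two_mul_div_two_of_even hq.add_one, hμ] at hi
    exact h2 (by linear_combination hi)
  · have hs := pow_eq_self_of_add_mul_eq_zero hF hμ (u := u) (r := 2 * (ω ^ p ^ k - c₀ * ω))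
      (by linear_combination hE)
    rw [mul_pow, two_pow_expChar_pow] at hs
    refine hiii ω hω0 ((pow_sub_mul_pow_eq_self_iff k hω0 hωq).mp (mul_left_cancel₀ h2 hs)) ?_
    rw [← mul_left_inj' hω0, pow_sub_one_mul (expChar_pow_pos F p m).ne', hωq]

theorem exists_eq_zero_of_not_cond_i [Fintype F] (hF : Fintype.card F = q ^ 2) (hq : Odd q)
    {b c : F} (hb : b ≠ 0) (hbc : b ^ (q + 1) = c ^ (q + 1)) (c₀ : F) (k : ℕ)
    (hi : (b⁻¹ * c) ^ ((q + 1) / 2) ≠ -1) :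
    ∃ e : F, e ≠ 0 ∧ ∃ u : F, u ≠ 0 ∧ u ^ q + (e ^ (q - 1)) ^ 2 * u +
      2 * e ^ (q - 1) * ((b * u ^ q + c * u) ^ p ^ k - c₀ * (b * u ^ q + c * u)) = 0 := by
  have hnorm : (b⁻¹ * c) ^ (q + 1) = 1 := by
    rw [mul_pow, inv_pow, ← hbc, inv_mul_cancel₀ (pow_ne_zero _ hb)]
  have hhalf : (b⁻¹ * c) ^ ((q + 1) / 2) = 1 := by
    refine (sq_eq_one_iff.mp ?_).resolve_right hi
    rw [← pow_mul, Nat.div_mul_cancel hq.add_one.two_dvd, hnorm]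
  obtain ⟨e, he, hsq⟩ := exists_sq_pow_sub_one_eq_of_pow_half_eq_one hF hq hhalf
  obtain ⟨u, hu, hu'⟩ := exists_pow_sub_one_eq_of_pow_add_one_eq_one hF (δ := -(b⁻¹ * c))
    (by rw [hq.add_one.neg_pow, hnorm])
  have huq : u ^ q = -(b⁻¹ * c) * u := by
    rw [← hu', pow_sub_one_mul (expChar_pow_pos F p m).ne']
  have hω : b * u ^ q + c * u = 0 := by
    rw [huq]
    field_simp
    ring
  refine ⟨e, he, u, hu, ?_⟩
  rw [hω, hsq, huq, zero_pow (expChar_pow_pos F p k).ne']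
  ring

theorem exists_eq_zero_of_not_cond_iii {b c c₀ ω : F} (hc : c ≠ 0) (hbc_ne : b ≠ c)
    (hbc : b ^ (q + 1) = c ^ (q + 1)) (k : ℕ) (hω0 : ω ≠ 0)
    (hω : ((b ^ q * c⁻¹) ^ p ^ k - 1) * ω ^ (p ^ k - 1) = b ^ q * c⁻¹ * c₀ ^ q - c₀)
    (hωd : ω ^ (q - 1) = b ^ q * c⁻¹) :
    ∃ u : F, u ≠ 0 ∧
      u ^ q + u + 2 * ((b * u ^ q + c * u) ^ p ^ k - c₀ * (b * u ^ q + c * u)) = 0 := by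
  have hωq : ω ^ q = b ^ q * c⁻¹ * ω := by
    rw [← hωd, pow_sub_one_mul (expChar_pow_pos F p m).ne']
  have hs := (pow_sub_mul_pow_eq_self_iff k hω0 hωq).mpr hω
  obtain ⟨u, hT, htr⟩ := exists_mul_pow_add_mul_eq_and_pow_add_eq hc hbc_ne hbc hωq
    (r := -2 * (ω ^ p ^ k - c₀ * ω))
    (by rw [mul_pow, neg_pow, neg_one_pow_expChar_pow, two_pow_expChar_pow, hs, neg_one_mul])
  refine ⟨u, ?_, ?_⟩
  · rintro rfl
    rw [zero_pow (expChar_pow_pos F p m).ne', mul_zero, mul_zero, add_zero] at hT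
    exact hω0 hT.symm
  · rw [hT]
    linear_combination htr

end Frobenius

theorem planar_iff_three_conditions_general
    (p m k : ℕ) (hp : p.Prime) (hodd : Odd p)
    (q : ℕ) (hq : q = p ^ m)
    (F : Type*) [Field F] [Fintype F] (hF : Fintype.card F = q ^ 2)
    (b c c₀ : F) (hb : b ≠ 0) (hc : c ≠ 0) (hbc : b ^ (q + 1) = c ^ (q + 1))
    (ℓ : F → F)
    (hℓ : ∀ x, ℓ x = (b * x ^ q + c * x) ^ p ^ k - c₀ * (b * x ^ q + c * x))
    (f : F → F) (hf : ∀ x, f x = x ^ (q + 1) + ℓ (x ^ 2)) :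
    (∀ e : F, e ≠ 0 → Function.Bijective (fun x => f (x + e) - f x)) ↔
      ((b⁻¹ * c) ^ ((q + 1) / 2) = -1 ∧
        (∀ ω : F, ω ≠ 0 → ω ^ (p ^ k - 1) = c₀ → ω ^ (q - 1) ≠ b ^ q * c⁻¹) ∧
        (∀ ω : F, ω ≠ 0 →
          ((b⁻¹ * c ^ q) ^ p ^ k - 1) * ω ^ (p ^ k - 1) = b⁻¹ * c ^ q * c₀ ^ q - c₀ →
          ω ^ (q - 1) ≠ b ^ q * c⁻¹)) := by
  subst hq
  have : Fact p.Prime := ⟨hp⟩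
  have : CharP F p := charP_of_card_eq_prime_pow (hF.trans (pow_mul p m 2).symm)
  have h2 : (2 : F) ≠ 0 :=
    Ring.two_ne_zero (by rw [ringChar.eq F p]; exact hodd.ne_two_of_dvd_nat dvd_rfl)
  refine (isPlanar_pow_succ_add_comp_sq_iff (.mk' ℓ (map_add_of_eq_pow_sub_mul hℓ)) hf).trans ?_
  simp only [AddMonoidHom.mk'_apply, hℓ, inv_mul_pow_eq_pow_mul_inv hb hc hbc]
  constructor
  · intro H
    have hi : (b⁻¹ * c) ^ ((p ^ m + 1) / 2) = -1 := by
      by_contra hi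
      obtain ⟨e, he, u, hu, hE⟩ := exists_eq_zero_of_not_cond_i hF hodd.pow hb hbc c₀ k hi
      exact H e he u hu hE
    have hbc_ne : b ≠ c := by
      rintro rfl
      rw [inv_mul_cancel₀ hb, one_pow] at hi
      exact h2 (by linear_combination hi)
    have hiii : ∀ ω : F, ω ≠ 0 →
        ((b ^ p ^ m * c⁻¹) ^ p ^ k - 1) * ω ^ (p ^ k - 1) = b ^ p ^ m * c⁻¹ * c₀ ^ p ^ m - c₀ →
        ω ^ (p ^ m - 1) ≠ b ^ p ^ m * c⁻¹ := fun ω hω0 hω hωd => by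
      obtain ⟨u, hu, hE⟩ := exists_eq_zero_of_not_cond_iii hc hbc_ne hbc k hω0 hω hωd
      exact H 1 one_ne_zero u hu (by simpa using hE)
    exact ⟨hi, cond_ii_of_cond_iii (expChar_pow_pos F p m).ne' (expChar_pow_pos F p k).ne' hiii,
      hiii⟩
  · rintro ⟨hi, -, hiii⟩ e he u hu
    exact ne_zero_of_cond_i_of_cond_iii hF hodd.pow h2 hb hc hbc hi hiii
      (pow_sub_one_pow_add_one_eq_one hF he) hu

/-- for `ℓ(x) = (b·x^q + c·x)^{p^k} − c₀·(b·x^q + c·x)` with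
`N(b) = N(c)`, `b, c ≠ 0` and `0 < k < m`, the function `x^{q+1} + ℓ(x²)` is planar
on `F_{q²}` iff the three listed conditions hold. -/
theorem planar_iff_three_conditions
    (p m k : ℕ) (hp : p.Prime) (hodd : Odd p) (hm : 0 < m) (hk0 : 0 < k) (hkm : k < m)
    (q : ℕ) (hq : q = p ^ m)
    (F : Type*) [Field F] [Fintype F] (hF : Fintype.card F = q ^ 2)
    (b c c₀ : F) (hb : b ≠ 0) (hc : c ≠ 0) (hbc : b ^ (q + 1) = c ^ (q + 1))
    (ℓ : F → F)
    (hℓ : ∀ x, ℓ x = (b * x ^ q + c * x) ^ p ^ k - c₀ * (b * x ^ q + c * x))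
    (f : F → F) (hf : ∀ x, f x = x ^ (q + 1) + ℓ (x ^ 2)) :
    (∀ e : F, e ≠ 0 → Function.Bijective (fun x => f (x + e) - f x)) ↔
      ((b⁻¹ * c) ^ ((q + 1) / 2) = -1 ∧
        (∀ ω : F, ω ≠ 0 → ω ^ (p ^ k - 1) = c₀ → ω ^ (q - 1) ≠ b ^ q * c⁻¹) ∧
        (∀ ω : F, ω ≠ 0 →
          ((b⁻¹ * c ^ q) ^ p ^ k - 1) * ω ^ (p ^ k - 1) = b⁻¹ * c ^ q * c₀ ^ q - c₀ →
          ω ^ (q - 1) ≠ b ^ q * c⁻¹)) :=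
  planar_iff_three_conditions_general p m k hp hodd q hq F hF b c c₀ hb hc hbc ℓ hℓ f hf
end

section
/- Let q be a power of an odd prime and A, B, u ∈ F_{q³}. The map x ↦ B^{q²}·x^{q²} + A·x^q + u·x is a bijection of F_{q³} if and only if N(u) + N(A) + N(B) − Tr(A·B·u^{q²}) ≠ 0. -/
/-!
Put `σ x = x ^ q`, an automorphism of order 3 of `F`, and `L x = u x + A σ x + B^{q²} σ² x`.
The matrix whose determinant appears is the Dickson matrix `D` of `L`: its rows are the
coefficient vectors of `L`, `σ ∘ L` and `σ² ∘ L` with respect to `x, σ x, σ² x`. Hence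
`D (z, σ z, σ² z)ᵀ = (L z, σ (L z), σ² (L z))ᵀ`, so a nonzero root of `L` gives a nonzero kernel
vector of `D`. Conversely, a kernel vector `w` of `D` is the first column of the Dickson matrix of
a σ-linearized map `L'` with `L ∘ L' = 0`; by Dedekind's independence of the characters
`1, σ, σ²`, `L'` is nonzero when `w` is, so `L` has a nonzero root.
-/

open Function Matrix

section Dickson

variable {K : Type*} [Field K] (σ : K →+* K)

def linearizedMap (a b c : K) : K →+ K :=
  AddMonoidHom.mk' (fun x => a * x + b * σ x + c * σ (σ x)) fun x y => by
    simp only [map_add]; ring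

@[simp]
lemma linearizedMap_apply (a b c x : K) :
    linearizedMap σ a b c x = a * x + b * σ x + c * σ (σ x) := rfl

def dicksonMatrix (a b c : K) : Matrix (Fin 3) (Fin 3) K :=
  !![a, b, c; σ c, σ a, σ b; σ (σ b), σ (σ c), σ (σ a)]

lemma dicksonMatrix_mulVec (a b c : K) (w : Fin 3 → K) :
    dicksonMatrix σ a b c *ᵥ w = ![a * w 0 + b * w 1 + c * w 2,
      σ c * w 0 + σ a * w 1 + σ b * w 2, σ (σ b) * w 0 + σ (σ c) * w 1 + σ (σ a) * w 2] := by
  ext i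
  fin_cases i <;> simp [dicksonMatrix, mulVec, dotProduct, Fin.sum_univ_three]

variable {σ}

lemma dicksonMatrix_mulVec_orbit (hσ : ∀ x, σ (σ (σ x)) = x) (a b c z : K) :
    dicksonMatrix σ a b c *ᵥ ![z, σ z, σ (σ z)] =
      ![linearizedMap σ a b c z, σ (linearizedMap σ a b c z),
        σ (σ (linearizedMap σ a b c z))] := by
  simp only [dicksonMatrix_mulVec, linearizedMap_apply, map_add, map_mul, hσ, cons_val_zero,
    cons_val_one, cons_val_two, tail_cons, head_cons]
  ring_nf

/-- `linearizedMap σ (w 0) (σ (w 2)) (σ (σ (w 1)))` is the map whose Dickson matrix has first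
column `w`, and Dickson matrices are multiplicative under composition. -/
lemma linearizedMap_linearizedMap_of_mulVec_eq_zero (hσ : ∀ x, σ (σ (σ x)) = x) {a b c : K}
    {w : Fin 3 → K} (hw : dicksonMatrix σ a b c *ᵥ w = 0) (x : K) :
    linearizedMap σ a b c (linearizedMap σ (w 0) (σ (w 2)) (σ (σ (w 1))) x) = 0 := by
  rw [dicksonMatrix_mulVec, cons_eq_zero_iff, cons_eq_zero_iff, cons_eq_zero_iff] at hw
  obtain ⟨r0, r1, r2, -⟩ := hw
  replace r1 := congrArg (fun y => σ (σ y)) r1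
  replace r2 := congrArg σ r2
  simp only [map_add, map_mul, map_zero, hσ] at r1 r2
  simp only [linearizedMap_apply, map_add, map_mul, hσ]
  linear_combination x * r0 + σ (σ x) * r1 + σ x * r2

lemma linearizedMap_eq_zero_iff (hσ : orderOf σ = 3) {a b c : K} :
    linearizedMap σ a b c = 0 ↔ a = 0 ∧ b = 0 ∧ c = 0 := by
  refine ⟨fun h => ?_, fun ⟨ha, hb, hc⟩ => by ext; simp [ha, hb, hc]⟩
  let χ : Fin 3 → (K →* K) := fun i => (σ ^ (i : ℕ) : K →+* K)
  have hχ : Injective χ := fun i j hij => Fin.ext <|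
    pow_injOn_Iio_orderOf (x := σ) (by simp [hσ]) (by simp [hσ]) <|
      RingHom.ext fun x => DFunLike.congr_fun hij x
  have hli := Fintype.linearIndependent_iff.1 <| (linearIndependent_monoidHom K K).comp χ hχ
  have hsum : ∑ i, ![a, b, c] i • (χ i : K → K) = 0 := funext fun x => by
    simpa [Fin.sum_univ_three, χ] using DFunLike.congr_fun h x
  exact ⟨hli _ hsum 0, hli _ hsum 1, hli _ hsum 2⟩

lemma apply_apply_apply_of_orderOf_eq_three (hσ : orderOf σ = 3) (x : K) : σ (σ (σ x)) = x := by
  simpa [hσ] using DFunLike.congr_fun (pow_orderOf_eq_one σ) x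

theorem linearizedMap_injective_iff_det_ne_zero (hσ : orderOf σ = 3) {a b c : K} :
    Injective (linearizedMap σ a b c) ↔ (dicksonMatrix σ a b c).det ≠ 0 := by
  have hσ3 := apply_apply_apply_of_orderOf_eq_three hσ
  rw [injective_iff_map_eq_zero, ne_eq, ← exists_mulVec_eq_zero_iff, not_exists]
  constructor
  · rintro hinj w ⟨hw0, hw⟩
    obtain ⟨h0, h2, h1⟩ := (linearizedMap_eq_zero_iff hσ).1 <| AddMonoidHom.ext fun x =>
      hinj _ (linearizedMap_linearizedMap_of_mulVec_eq_zero hσ3 hw x)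
    simp only [map_eq_zero] at h1 h2
    exact hw0 (funext fun i => by fin_cases i <;> assumption)
  · intro hdet z hz
    by_contra hz0
    refine hdet ![z, σ z, σ (σ z)] ⟨fun h => hz0 (by simpa using congrFun h 0), ?_⟩
    rw [dicksonMatrix_mulVec_orbit hσ3, hz]
    simp

end Dickson

open Polynomial in
lemma FiniteField.exists_pow_ne_self {F : Type*} [Field F] [Fintype F] {q : ℕ} (hq : 1 < q)
    (hcard : q < Fintype.card F) : ∃ x : F, x ^ q ≠ x := by
  by_contra! h
  have hroots := card_le_degree_of_subset_roots (p := (X ^ q - X : F[X])) (Z := Finset.univ)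
    fun x _ => by simp [mem_roots', FiniteField.X_pow_card_sub_X_ne_zero F hq, h x]
  rw [FiniteField.X_pow_card_sub_X_natDegree_eq F hq, Finset.card_univ] at hroots
  omega

lemma FiniteField.orderOf_iterateFrobenius {F : Type*} [Field F] [Fintype F] {p m n : ℕ}
    [Fact p.Prime] [CharP F p] [hn : Fact n.Prime] (hm : 0 < m)
    (hF : Fintype.card F = (p ^ m) ^ n) : orderOf (iterateFrobenius F p m) = n := by
  refine orderOf_eq_prime (RingHom.ext fun x => ?_) fun h => ?_
  · rw [RingHom.coe_pow, show ⇑(iterateFrobenius F p m) = (· ^ p ^ m) from rfl, pow_iterate,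
      ← hF]
    exact FiniteField.pow_card x
  · have hq : 1 < p ^ m := Nat.one_lt_pow hm.ne' (Fact.out : p.Prime).one_lt
    obtain ⟨x, hx⟩ := FiniteField.exists_pow_ne_self (F := F) hq
      (hF ▸ lt_self_pow₀ hq hn.out.one_lt)
    exact hx (DFunLike.congr_fun h x)

theorem linearized_bijective_iff_det_ne_zero_general
    (p m : ℕ) (hp : p.Prime) (hm : 0 < m)
    (q : ℕ) (hq : q = p ^ m)
    (F : Type*) [Field F] [Fintype F] (hF : Fintype.card F = q ^ 3)
    (A B u : F)
    (Tr : F → F) (hTr : ∀ x, Tr x = x + x ^ q + x ^ q ^ 2) :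
    Function.Bijective (fun x : F => B ^ q ^ 2 * x ^ q ^ 2 + A * x ^ q + u * x) ↔
      u ^ (1 + q + q ^ 2) + A ^ (1 + q + q ^ 2) + B ^ (1 + q + q ^ 2)
        - Tr (A * B * u ^ q ^ 2) ≠ 0 := by
  have : Fact p.Prime := ⟨hp⟩
  have : CharP F p := charP_of_card_eq_prime_pow (f := m * 3) (by rw [hF, hq, ← pow_mul])
  let σ := iterateFrobenius F p m
  have hσ : orderOf σ = 3 := FiniteField.orderOf_iterateFrobenius hm (hq ▸ hF)
  have hσ1 (x : F) : x ^ q = σ x := by rw [hq]; rfl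
  have hσ2 (x : F) : x ^ q ^ 2 = σ (σ x) := by rw [← hσ1, ← hσ1, ← pow_mul, sq]
  have hL : (fun x : F => B ^ q ^ 2 * x ^ q ^ 2 + A * x ^ q + u * x) =
      linearizedMap σ u A (B ^ q ^ 2) := by
    ext x; simp only [linearizedMap_apply, hσ1, hσ2]; ring
  have hdet : u ^ (1 + q + q ^ 2) + A ^ (1 + q + q ^ 2) + B ^ (1 + q + q ^ 2)
      - Tr (A * B * u ^ q ^ 2) = (dicksonMatrix σ u A (B ^ q ^ 2)).det := by
    simp only [det_fin_three, dicksonMatrix, hTr, pow_add, pow_one, hσ1, hσ2, map_mul,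
      apply_apply_apply_of_orderOf_eq_three hσ, of_apply, cons_val', cons_val_zero, cons_val_one,
      cons_val_two, tail_cons, head_cons]
    ring
  rw [hL, hdet, ← Finite.injective_iff_bijective]
  exact linearizedMap_injective_iff_det_ne_zero hσ

/-- the map `x ↦ B^{q²}·x^{q²} + A·x^q + u·x` is a bijection of `F_{q³}`
iff `N(u) + N(A) + N(B) − Tr(A·B·u^{q²}) ≠ 0`. -/
theorem linearized_bijective_iff_det_ne_zero
    (p m : ℕ) (hp : p.Prime) (hodd : Odd p) (hm : 0 < m)
    (q : ℕ) (hq : q = p ^ m)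
    (F : Type*) [Field F] [Fintype F] (hF : Fintype.card F = q ^ 3)
    (A B u : F)
    (Tr : F → F) (hTr : ∀ x, Tr x = x + x ^ q + x ^ q ^ 2) :
    Function.Bijective (fun x : F => B ^ q ^ 2 * x ^ q ^ 2 + A * x ^ q + u * x) ↔
      u ^ (1 + q + q ^ 2) + A ^ (1 + q + q ^ 2) + B ^ (1 + q + q ^ 2)
        - Tr (A * B * u ^ q ^ 2) ≠ 0 :=
  linearized_bijective_iff_det_ne_zero_general p m hp hm q hq F hF A B u Tr hTr
end
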